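/- For a pairwise Markov random field on a tree T with strictly positive edge potentials, every consistent belief system satisfies F_B ≥ -ln Z, where Z = Σ_x ∏_{{i,j}∈E(T)} ψ_{ij}(x_i, x_j), and equality holds if and only if the beliefs are the exact marginals of p = p̃/Z (b_i = p_i for all i and b_{ij} = p_{ij} for all edges). In particular, the minimum of the Bethe free energy over all consistent belief systems equals -ln Z. -/

import Mathlib

open Finset

variable {V : Type*} [Fintype V] [DecidableEq V]
  {X : V → Type*} [∀ i, Fintype (X i)] [∀ i, DecidableEq (X i)]

/-- The single-variable marginal `p_i(s) = Σ_{x : x_i = s} p(x)`. -/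
noncomputable def marg1 (p : ((i : V) → X i) → ℝ) (i : V) (s : X i) : ℝ :=
  ∑ x ∈ Finset.univ.filter (fun x : (i : V) → X i => x i = s), p x

/-- The pairwise marginal `p_{ij}(s,t) = Σ_{x : x_i = s, x_j = t} p(x)`. -/
noncomputable def marg2 (p : ((i : V) → X i) → ℝ) (i j : V) (s : X i) (t : X j) : ℝ :=
  ∑ x ∈ Finset.univ.filter (fun x : (i : V) → X i => x i = s ∧ x j = t), p x

/-- The per-edge Bethe term `Σ_{s,t} b_{ij}(s,t) · ln (b_{ij}(s,t) / ψ_{ij}(s,t))`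
is a symmetric function of the (ordered) edge, hence descends to `Sym2 V`. -/
theorem betheEdgeTerm_symm {V : Type*} {X : V → Type*} [∀ i, Fintype (X i)]
    (b2 ψ2 : (i j : V) → X i → X j → ℝ)
    (hbsym : ∀ i j s t, b2 i j s t = b2 j i t s)
    (hψsym : ∀ i j s t, ψ2 i j s t = ψ2 j i t s) (i j : V) :
    (∑ s : X i, ∑ t : X j, b2 i j s t * Real.log (b2 i j s t / ψ2 i j s t))
      = ∑ t : X j, ∑ s : X i, b2 j i t s * Real.log (b2 j i t s / ψ2 j i t s) := by
  rw [Finset.sum_comm]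
  exact Finset.sum_congr rfl fun t _ => Finset.sum_congr rfl fun s _ => by
    rw [hbsym, hψsym]

/-- The Bethe free energy of a belief system `(b1, b2)` relative to edge
potentials `ψ2` on the tree `T`:
`F_B = Σ_{{i,j}∈E(T)} Σ_{s,t} b_{ij}(s,t) ln (b_{ij}(s,t)/ψ_{ij}(s,t))
       - Σ_i (deg(i) - 1) Σ_s b_i(s) ln b_i(s)`. -/
noncomputable def betheFreeEnergy (T : SimpleGraph V) [DecidableRel T.Adj]
    (b1 : (i : V) → X i → ℝ) (b2 ψ2 : (i j : V) → X i → X j → ℝ)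
    (hbsym : ∀ i j s t, b2 i j s t = b2 j i t s)
    (hψsym : ∀ i j s t, ψ2 i j s t = ψ2 j i t s) : ℝ :=
  (∑ e ∈ T.edgeFinset,
      Sym2.lift ⟨fun i j => ∑ s : X i, ∑ t : X j,
          b2 i j s t * Real.log (b2 i j s t / ψ2 i j s t),
        betheEdgeTerm_symm b2 ψ2 hbsym hψsym⟩ e)
    - ∑ i : V, ((T.degree i : ℝ) - 1) * ∑ s : X i, b1 i s * Real.log (b1 i s)

/-! The beliefs determine the tree-structured function
`q(x) = ∏_{ij ∈ E} b_ij(x_i, x_j) · ∏_i b_i(x_i)^(1 - deg i)`. Peeling off a leaf `v` with neighbour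
`u` multiplies `q` of the smaller tree by `b_vu(x_v, x_u) / b_u(x_u)`, a conditional law of `x_v`
given `x_u`, so by induction the marginals of `q` are exactly the beliefs. As `ln (q / p̃)` is a sum
of node and edge terms, its mean under any distribution with these marginals is `F_B`; under `q`
this reads `F_B = KL(q ‖ p) - ln Z`, and Gibbs' inequality gives `F_B ≥ -ln Z` with equality iff
`q = p`. Conversely, if the beliefs are the marginals of `p`, the mean under `p` gives
`F_B + ln Z = -KL(p ‖ q) ≤ 0`. -/

section Gibbs

open InformationTheory

variable {ι : Type*} [Fintype ι] {f g : ι → ℝ}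

lemma sum_mul_log_div_eq_sum_mul_klFun (hg : ∀ i, 0 < g i) (hsum : ∑ i, f i = ∑ i, g i) :
    ∑ i, f i * Real.log (f i / g i) = ∑ i, g i * klFun (f i / g i) := by
  have hterm : ∀ i, g i * klFun (f i / g i) = f i * Real.log (f i / g i) + (g i - f i) := by
    intro i
    rw [klFun_apply]
    field_simp [(hg i).ne']
    ring
  rw [Finset.sum_congr rfl fun i _ => hterm i, Finset.sum_add_distrib, Finset.sum_sub_distrib,
    hsum, sub_self, add_zero]

lemma sum_mul_log_div_nonneg (hf : ∀ i, 0 ≤ f i) (hg : ∀ i, 0 < g i)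
    (hsum : ∑ i, f i = ∑ i, g i) : 0 ≤ ∑ i, f i * Real.log (f i / g i) := by
  rw [sum_mul_log_div_eq_sum_mul_klFun hg hsum]
  exact Finset.sum_nonneg fun i _ =>
    mul_nonneg (hg i).le (klFun_nonneg (div_nonneg (hf i) (hg i).le))

lemma sum_mul_log_div_eq_zero_iff (hf : ∀ i, 0 ≤ f i) (hg : ∀ i, 0 < g i)
    (hsum : ∑ i, f i = ∑ i, g i) : ∑ i, f i * Real.log (f i / g i) = 0 ↔ f = g := by
  have hnonneg : ∀ i, 0 ≤ f i / g i := fun i => div_nonneg (hf i) (hg i).le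
  rw [sum_mul_log_div_eq_sum_mul_klFun hg hsum,
    Finset.sum_eq_zero_iff_of_nonneg fun i _ => mul_nonneg (hg i).le (klFun_nonneg (hnonneg i))]
  simp only [Finset.mem_univ, true_implies, mul_eq_zero, (hg _).ne', false_or,
    klFun_eq_zero_iff (hnonneg _), div_eq_one_iff_eq (hg _).ne', funext_iff]

lemma sum_mul_log_div_swap_nonpos (hf : ∀ i, 0 ≤ f i) (hg : ∀ i, 0 < g i)
    (hsum : ∑ i, f i = ∑ i, g i) : ∑ i, f i * Real.log (g i / f i) ≤ 0 := by
  have hswap : ∀ i, Real.log (g i / f i) = -Real.log (f i / g i) := fun i => by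
    rw [← Real.log_inv, inv_div]
  simp_rw [hswap, mul_neg, Finset.sum_neg_distrib, neg_nonpos]
  exact sum_mul_log_div_nonneg hf hg hsum

lemma div_sum_pos_and_sum_div_sum_eq_one [Nonempty ι] (hg : ∀ i, 0 < g i) :
    (∀ i, 0 < g i / ∑ j, g j) ∧ ∑ i, g i / ∑ j, g j = 1 := by
  have hZ : 0 < ∑ j, g j := Finset.sum_pos (fun j _ => hg j) Finset.univ_nonempty
  exact ⟨fun i => div_pos (hg i) hZ, by rw [← Finset.sum_div, div_self hZ.ne']⟩

end Gibbs

section Marginals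

lemma sum_mul_marg1 (q : ((i : V) → X i) → ℝ) (i : V) (h : X i → ℝ) :
    ∑ x, q x * h (x i) = ∑ s, marg1 q i s * h s := by
  rw [← Finset.sum_fiberwise Finset.univ (fun x => x i)]
  refine Finset.sum_congr rfl fun s _ => ?_
  rw [marg1, Finset.sum_mul]
  exact Finset.sum_congr rfl fun x hx => by rw [(Finset.mem_filter.1 hx).2]

lemma sum_mul_marg2 (q : ((i : V) → X i) → ℝ) (i j : V) (h : X i → X j → ℝ) :
    ∑ x, q x * h (x i) (x j) = ∑ s, ∑ t, marg2 q i j s t * h s t := by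
  rw [← Finset.sum_fiberwise Finset.univ (fun x => (x i, x j)),
    Fintype.sum_prod_type (f := fun st => ∑ x with (x i, x j) = st, q x * h (x i) (x j))]
  refine Finset.sum_congr rfl fun s _ => Finset.sum_congr rfl fun t _ => ?_
  rw [marg2, Finset.sum_mul]
  refine Finset.sum_congr (by simp only [Prod.mk.injEq]) fun x hx => ?_
  obtain ⟨-, rfl, rfl⟩ := Finset.mem_filter.1 hx
  rfl

lemma sum_marg1 (q : ((i : V) → X i) → ℝ) (i : V) : ∑ s, marg1 q i s = ∑ x, q x := by
  simp only [marg1]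
  exact Finset.sum_fiberwise Finset.univ (fun x => x i) q

lemma sum_marg2_right (q : ((i : V) → X i) → ℝ) (i j : V) (s : X i) :
    ∑ t, marg2 q i j s t = marg1 q i s := by
  simp only [marg2, marg1, ← Finset.filter_filter]
  exact Finset.sum_fiberwise _ (fun x => x j) q

lemma marg2_comm (q : ((i : V) → X i) → ℝ) (i j : V) (s : X i) (t : X j) :
    marg2 q i j s t = marg2 q j i t s := by
  simp only [marg2, and_comm]

end Marginals

namespace Equiv

variable {α : Type*} [DecidableEq α] {β : α → Type*} {i : α}

lemma piSplitAt_symm_apply_self (a : β i) (f : (j : {j // j ≠ i}) → β j) :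
    (piSplitAt i β).symm (a, f) i = a := by
  simp [piSplitAt_symm_apply]

lemma piSplitAt_symm_apply_of_ne (a : β i) (f : (j : {j // j ≠ i}) → β j) {j : α} (hj : j ≠ i) :
    (piSplitAt i β).symm (a, f) j = f ⟨j, hj⟩ := by
  simp [piSplitAt_symm_apply, hj]

lemma restrict_piSplitAt_symm (a : β i) (f : (j : {j // j ≠ i}) → β j) :
    (fun j : {j // j ≠ i} => (piSplitAt i β).symm (a, f) j) = f :=
  funext fun j => piSplitAt_symm_apply_of_ne a f j.2

end Equiv

lemma Fintype.sum_eq_sum_sum_piSplitAt {α : Type*} [Fintype α] [DecidableEq α] {β : α → Type*}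
    [∀ i, Fintype (β i)] {M : Type*} [AddCommMonoid M] (i : α) (f : ((j : α) → β j) → M) :
    ∑ x, f x = ∑ x' : (j : {j // j ≠ i}) → β j, ∑ a, f ((Equiv.piSplitAt i β).symm (a, x')) := by
  rw [← (Equiv.piSplitAt i β).symm.sum_comp, Fintype.sum_prod_type, Finset.sum_comm]

section LeafExtension

variable {v u : V} {q' : ((j : {j // j ≠ v}) → X j) → ℝ} {k : X v → X u → ℝ}

noncomputable def leafExtension (v u : V) (q' : ((j : {j // j ≠ v}) → X j) → ℝ)
    (k : X v → X u → ℝ) (x : (i : V) → X i) : ℝ :=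
  q' (fun j => x j) * k (x v) (x u)

omit [Fintype V] [∀ i, Fintype (X i)] [∀ i, DecidableEq (X i)] in
lemma leafExtension_piSplitAt_symm (huv : u ≠ v) (a : X v) (x' : (j : {j // j ≠ v}) → X j) :
    leafExtension v u q' k ((Equiv.piSplitAt v X).symm (a, x')) = q' x' * k a (x' ⟨u, huv⟩) := by
  rw [leafExtension, Equiv.restrict_piSplitAt_symm, Equiv.piSplitAt_symm_apply_self,
    Equiv.piSplitAt_symm_apply_of_ne a x' huv]

omit [∀ i, DecidableEq (X i)] in
lemma sum_filter_leafExtension (huv : u ≠ v) (hk : ∀ t, ∑ a, k a t = 1)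
    (P : ((j : {j // j ≠ v}) → X j) → Prop) [DecidablePred P] :
    ∑ x with P (fun j => x j), leafExtension v u q' k x = ∑ x' with P x', q' x' := by
  rw [Finset.sum_filter, Finset.sum_filter, Fintype.sum_eq_sum_sum_piSplitAt v]
  refine Finset.sum_congr rfl fun x' _ => ?_
  simp only [Equiv.restrict_piSplitAt_symm, leafExtension_piSplitAt_symm huv]
  split_ifs
  · rw [← Finset.mul_sum, hk, mul_one]
  · exact Finset.sum_const_zero

lemma marg2_leafExtension (huv : u ≠ v) (s : X v) (t : X u) :
    marg2 (leafExtension v u q' k) v u s t = k s t * marg1 q' ⟨u, huv⟩ t := by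
  rw [marg2, marg1, Finset.sum_filter, Finset.sum_filter, Fintype.sum_eq_sum_sum_piSplitAt v,
    Finset.mul_sum]
  refine Finset.sum_congr rfl fun x' _ => ?_
  simp only [leafExtension_piSplitAt_symm huv, Equiv.piSplitAt_symm_apply_self,
    Equiv.piSplitAt_symm_apply_of_ne _ x' huv]
  split_ifs with ht
  · simp [ht, mul_comm]
  · simp [ht]

lemma marg1_leafExtension_of_ne (huv : u ≠ v) (hk : ∀ t, ∑ a, k a t = 1) {i : V} (hi : i ≠ v)
    (s : X i) : marg1 (leafExtension v u q' k) i s = marg1 q' ⟨i, hi⟩ s :=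
  sum_filter_leafExtension huv hk fun x' => x' ⟨i, hi⟩ = s

lemma marg2_leafExtension_of_ne (huv : u ≠ v) (hk : ∀ t, ∑ a, k a t = 1) {i j : V} (hi : i ≠ v)
    (hj : j ≠ v) (s : X i) (t : X j) :
    marg2 (leafExtension v u q' k) i j s t = marg2 q' ⟨i, hi⟩ ⟨j, hj⟩ s t :=
  sum_filter_leafExtension huv hk fun x' => x' ⟨i, hi⟩ = s ∧ x' ⟨j, hj⟩ = t

end LeafExtension

namespace SimpleGraph

omit [Fintype V] [DecidableEq V] in
lemma IsTree.comap_val_of_degree_eq_one {T : SimpleGraph V} {v : V} [Fintype (T.neighborSet v)]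
    (hT : T.IsTree) (hv : T.degree v = 1) : (T.comap ((↑) : {j // j ≠ v} → V)).IsTree :=
  ⟨hT.connected.induce_compl_singleton_of_degree_eq_one hv,
    hT.isAcyclic.comap (Hom.comap _ T) Subtype.val_injective⟩

variable (T : SimpleGraph V) [DecidableRel T.Adj]

lemma degree_comap_val_add_ite (v : V) (j : {j // j ≠ v}) :
    (T.comap ((↑) : {j // j ≠ v} → V)).degree j + (if T.Adj j v then 1 else 0) = T.degree j := by
  have hnbr : (T.comap ((↑) : {j // j ≠ v} → V)).neighborFinset j
      = (T.neighborFinset j).subtype (· ≠ v) := by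
    ext w; simp
  rw [← card_neighborFinset_eq_degree, ← card_neighborFinset_eq_degree, hnbr, Finset.card_subtype,
    Finset.filter_ne']
  split_ifs with h
  · exact Finset.card_erase_add_one ((mem_neighborFinset _ _ _).2 h)
  · rw [Finset.erase_eq_of_notMem (by simpa using h), add_zero]

lemma map_edgeFinset_comap_val (v : V) :
    (T.comap ((↑) : {j // j ≠ v} → V)).edgeFinset.map (Function.Embedding.subtype _).sym2Map
      = T.edgeFinset.filter (v ∉ ·) := by
  ext e
  induction e with
  | _ a b => simp [Sym2.exists]; grind [T.adj_comm]

lemma filter_mem_edgeFinset_of_leaf {v u : V} (hleaf : ∀ w, T.Adj v w ↔ w = u) :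
    T.edgeFinset.filter (v ∈ ·) = {s(v, u)} := by
  ext e
  induction e with
  | _ a b => simp; grind [T.adj_comm]

lemma prod_edgeFinset_of_leaf {M : Type*} [CommMonoid M] {v u : V} (hleaf : ∀ w, T.Adj v w ↔ w = u)
    (F : Sym2 V → M) :
    ∏ e ∈ T.edgeFinset, F e
      = F s(v, u) * ∏ e ∈ (T.comap ((↑) : {j // j ≠ v} → V)).edgeFinset, F (e.map (↑)) := by
  rw [← Finset.prod_filter_mul_prod_filter_not T.edgeFinset (v ∈ ·),
    filter_mem_edgeFinset_of_leaf T hleaf, Finset.prod_singleton, ← map_edgeFinset_comap_val,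
    Finset.prod_map]
  rfl

end SimpleGraph

noncomputable def edgeProduct (T : SimpleGraph V) [DecidableRel T.Adj]
    (c : (i j : V) → X i → X j → ℝ) (hc : ∀ i j s t, c i j s t = c j i t s)
    (x : (i : V) → X i) : ℝ :=
  ∏ e ∈ T.edgeFinset, Sym2.lift ⟨fun i j => c i j (x i) (x j), fun i j => hc i j (x i) (x j)⟩ e

noncomputable def beliefJoint (T : SimpleGraph V) [DecidableRel T.Adj]
    (b1 : (i : V) → X i → ℝ) (b2 : (i j : V) → X i → X j → ℝ)
    (hbsym : ∀ i j s t, b2 i j s t = b2 j i t s) (x : (i : V) → X i) : ℝ :=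
  edgeProduct T b2 hbsym x * ∏ i, b1 i (x i) ^ (1 - (T.degree i : ℤ))

section LeafRemoval

variable (T : SimpleGraph V) [DecidableRel T.Adj] {v u : V} {b1 : (i : V) → X i → ℝ}
  {b2 : (i j : V) → X i → X j → ℝ} (hbsym : ∀ i j s t, b2 i j s t = b2 j i t s)

omit [∀ i, Fintype (X i)] [∀ i, DecidableEq (X i)] in
lemma edgeProduct_of_leaf (hleaf : ∀ w, T.Adj v w ↔ w = u) (x : (i : V) → X i) :
    edgeProduct T b2 hbsym x = b2 v u (x v) (x u) *
      edgeProduct (T.comap ((↑) : {j // j ≠ v} → V)) (fun i j => b2 i j) (fun i j => hbsym i j)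
        (fun j => x j) := by
  rw [edgeProduct, T.prod_edgeFinset_of_leaf hleaf]
  simp only [Sym2.lift_mk, Sym2.lift_map_apply]
  rfl

omit [∀ i, Fintype (X i)] [∀ i, DecidableEq (X i)] in
lemma prod_zpow_degree_of_leaf (hleaf : ∀ w, T.Adj v w ↔ w = u) (hb1 : ∀ i s, b1 i s ≠ 0)
    (x : (i : V) → X i) :
    ∏ i, b1 i (x i) ^ (1 - (T.degree i : ℤ))
      = (∏ j : {j // j ≠ v}, b1 j (x j) ^ (1 - ((T.comap ((↑) : {j // j ≠ v} → V)).degree j : ℤ)))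
        * (b1 u (x u))⁻¹ := by
  have huv : u ≠ v := ((hleaf u).2 rfl).ne'
  have hv : T.degree v = 1 :=
    SimpleGraph.degree_eq_one_iff_existsUnique_adj.2 ⟨u, (hleaf u).2 rfl, fun w => (hleaf w).1⟩
  have hfac : ∀ j : {j // j ≠ v}, b1 j (x j) ^ (1 - (T.degree j : ℤ))
      = b1 j (x j) ^ (1 - ((T.comap ((↑) : {j // j ≠ v} → V)).degree j : ℤ))
        * if j = ⟨u, huv⟩ then (b1 u (x u))⁻¹ else 1 := by
    intro j
    rw [← T.degree_comap_val_add_ite v j]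
    by_cases hj : (j : V) = u
    · obtain rfl : j = ⟨u, huv⟩ := Subtype.ext hj
      simp only [T.adj_comm, hleaf, if_true]
      push_cast
      rw [sub_add_eq_sub_sub, zpow_sub₀ (hb1 u (x u)), zpow_one, div_eq_mul_inv]
    · rw [if_neg fun h => hj (congrArg Subtype.val h)]
      simp [T.adj_comm, hleaf, hj]
  rw [Fintype.prod_eq_mul_prod_subtype_ne _ v, hv, Finset.prod_congr rfl fun j _ => hfac j,
    Finset.prod_mul_distrib, Finset.prod_ite_eq']
  simp

omit [∀ i, Fintype (X i)] [∀ i, DecidableEq (X i)] in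
lemma beliefJoint_eq_leafExtension (hleaf : ∀ w, T.Adj v w ↔ w = u) (hb1 : ∀ i s, b1 i s ≠ 0) :
    beliefJoint T b1 b2 hbsym
      = leafExtension v u
          (beliefJoint (T.comap ((↑) : {j // j ≠ v} → V)) (fun j => b1 j) (fun i j => b2 i j)
            fun i j => hbsym i j)
          (fun a t => b2 v u a t / b1 u t) := by
  funext x
  rw [beliefJoint, edgeProduct_of_leaf T hbsym hleaf, prod_zpow_degree_of_leaf T hleaf hb1,
    leafExtension, beliefJoint, div_eq_mul_inv]
  ring

end LeafRemoval

lemma marg1_beliefJoint_of_subsingleton [Subsingleton V] (T : SimpleGraph V) [DecidableRel T.Adj]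
    (b1 : (i : V) → X i → ℝ) (b2 : (i j : V) → X i → X j → ℝ)
    (hbsym : ∀ i j s t, b2 i j s t = b2 j i t s) (i : V) (s : X i) :
    marg1 (beliefJoint T b1 b2 hbsym) i s = b1 i s := by
  have hadj : ∀ a b, ¬ T.Adj a b := fun a b h => h.ne (Subsingleton.elim a b)
  have hq : ∀ x, beliefJoint T b1 b2 hbsym x = b1 i (x i) := by
    intro x
    rw [beliefJoint, edgeProduct, SimpleGraph.edgeFinset_eq_empty.2 (by ext; simp [hadj]),
      Finset.prod_empty, one_mul, Fintype.prod_subsingleton _ i,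
      (T.degree_eq_zero_iff_notMem_support i).2 (by simp)]
    simp
  have : IsEmpty {j // j ≠ i} := ⟨fun j => j.2 (Subsingleton.elim _ _)⟩
  rw [marg1, Finset.sum_filter, Fintype.sum_eq_sum_sum_piSplitAt i, Fintype.sum_unique]
  simp [hq]

theorem beliefJoint_marginals {T : SimpleGraph V} [DecidableRel T.Adj] (hT : T.IsTree)
    {b1 : (i : V) → X i → ℝ} {b2 : (i j : V) → X i → X j → ℝ}
    (hbsym : ∀ i j s t, b2 i j s t = b2 j i t s) (hb1 : ∀ i s, b1 i s ≠ 0)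
    (hmarg : ∀ i j, T.Adj i j → ∀ s, ∑ t, b2 i j s t = b1 i s) :
    (∀ i s, marg1 (beliefJoint T b1 b2 hbsym) i s = b1 i s) ∧
      ∀ i j, T.Adj i j → ∀ s t, marg2 (beliefJoint T b1 b2 hbsym) i j s t = b2 i j s t := by
  obtain ⟨n, hn⟩ : ∃ n, Fintype.card V = n := ⟨_, rfl⟩
  induction n using Nat.strong_induction_on generalizing V with
  | _ n ih =>
  rcases subsingleton_or_nontrivial V with hV | hV
  · exact ⟨marg1_beliefJoint_of_subsingleton T b1 b2 hbsym,
      fun i j hij => absurd (Subsingleton.elim i j) hij.ne⟩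
  obtain ⟨v, hv⟩ := hT.exists_vert_degree_one_of_nontrivial
  obtain ⟨u, hvu, huniq⟩ := SimpleGraph.degree_eq_one_iff_existsUnique_adj.1 hv
  have hleaf : ∀ w, T.Adj v w ↔ w = u := fun w => ⟨huniq w, fun h => h ▸ hvu⟩
  have huv : u ≠ v := hvu.ne'
  obtain ⟨ih1, ih2⟩ := ih _ (hn ▸ Fintype.card_subtype_lt (p := (· ≠ v)) (not_not.2 rfl))
    (hT.comap_val_of_degree_eq_one hv) (b1 := fun j => b1 j)
    (fun i j => hbsym i j) (fun i => hb1 i) (fun i j hij => hmarg i j hij) rfl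
  have hk : ∀ t, ∑ a, b2 v u a t / b1 u t = 1 := fun t => by
    simp_rw [← Finset.sum_div, hbsym v u, hmarg u v hvu.symm, div_self (hb1 u t)]
  have hleaf_marg : ∀ s t, marg2 (beliefJoint T b1 b2 hbsym) v u s t = b2 v u s t := by
    intro s t
    rw [beliefJoint_eq_leafExtension T hbsym hleaf hb1, marg2_leafExtension huv, ih1,
      div_mul_cancel₀ _ (hb1 u t)]
  rw [beliefJoint_eq_leafExtension T hbsym hleaf hb1] at hleaf_marg ⊢
  refine ⟨fun i s => ?_, fun i j hij s t => ?_⟩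
  · by_cases hi : i = v
    · subst hi
      rw [← sum_marg2_right _ i u, Finset.sum_congr rfl fun t _ => hleaf_marg s t, hmarg i u hvu s]
    · rw [marg1_leafExtension_of_ne huv hk hi, ih1]
  · by_cases hi : i = v
    · subst hi
      obtain rfl := (hleaf j).1 hij
      exact hleaf_marg s t
    by_cases hj : j = v
    · subst hj
      obtain rfl := (hleaf i).1 hij.symm
      rw [marg2_comm, hleaf_marg, hbsym]
    rw [marg2_leafExtension_of_ne huv hk hi hj, ih2 ⟨i, hi⟩ ⟨j, hj⟩ hij]

section Energy

variable {T : SimpleGraph V} [DecidableRel T.Adj]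

omit [DecidableEq V] [∀ i, Fintype (X i)] [∀ i, DecidableEq (X i)] in
lemma sym2_lift_pos_of_mem_edgeFinset {c : (i j : V) → X i → X j → ℝ}
    (hc : ∀ i j s t, c i j s t = c j i t s) (hpos : ∀ i j, T.Adj i j → ∀ s t, 0 < c i j s t)
    (x : (i : V) → X i) {e : Sym2 V} (he : e ∈ T.edgeFinset) :
    0 < Sym2.lift ⟨fun i j => c i j (x i) (x j), fun i j => hc i j (x i) (x j)⟩ e := by
  induction e with
  | _ i j => exact hpos i j (SimpleGraph.mem_edgeFinset.1 he) _ _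

omit [DecidableEq V] [∀ i, Fintype (X i)] [∀ i, DecidableEq (X i)] in
lemma edgeProduct_pos {c : (i j : V) → X i → X j → ℝ} (hc : ∀ i j s t, c i j s t = c j i t s)
    (hpos : ∀ i j, T.Adj i j → ∀ s t, 0 < c i j s t) (x : (i : V) → X i) :
    0 < edgeProduct T c hc x :=
  Finset.prod_pos fun _ he => sym2_lift_pos_of_mem_edgeFinset hc hpos x he

variable {b1 : (i : V) → X i → ℝ} {b2 ψ2 : (i j : V) → X i → X j → ℝ}
  (hbsym : ∀ i j s t, b2 i j s t = b2 j i t s) (hψsym : ∀ i j s t, ψ2 i j s t = ψ2 j i t s)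

omit [DecidableEq V] [∀ i, Fintype (X i)] [∀ i, DecidableEq (X i)] in
lemma beliefJoint_pos (hb1 : ∀ i s, 0 < b1 i s) (hb2 : ∀ i j, T.Adj i j → ∀ s t, 0 < b2 i j s t)
    (x : (i : V) → X i) : 0 < beliefJoint T b1 b2 hbsym x :=
  mul_pos (edgeProduct_pos hbsym hb2 x) (Finset.prod_pos fun i _ => zpow_pos (hb1 i (x i)) _)

omit [DecidableEq V] [∀ i, Fintype (X i)] [∀ i, DecidableEq (X i)] in
lemma log_beliefJoint_div_edgeProduct (hb1 : ∀ i s, 0 < b1 i s)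
    (hb2 : ∀ i j, T.Adj i j → ∀ s t, 0 < b2 i j s t)
    (hψ : ∀ i j, T.Adj i j → ∀ s t, 0 < ψ2 i j s t) (x : (i : V) → X i) :
    Real.log (beliefJoint T b1 b2 hbsym x / edgeProduct T ψ2 hψsym x)
      = ∑ e ∈ T.edgeFinset,
          (Real.log (Sym2.lift ⟨fun i j => b2 i j (x i) (x j), fun i j => hbsym i j _ _⟩ e)
            - Real.log (Sym2.lift ⟨fun i j => ψ2 i j (x i) (x j), fun i j => hψsym i j _ _⟩ e))
        + ∑ i, (1 - (T.degree i : ℝ)) * Real.log (b1 i (x i)) := by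
  rw [Real.log_div (beliefJoint_pos hbsym hb1 hb2 x).ne' (edgeProduct_pos hψsym hψ x).ne',
    beliefJoint, Real.log_mul (edgeProduct_pos hbsym hb2 x).ne'
      (Finset.prod_pos fun i _ => zpow_pos (hb1 i (x i)) _).ne',
    edgeProduct, edgeProduct,
    Real.log_prod fun e he => (sym2_lift_pos_of_mem_edgeFinset hbsym hb2 x he).ne',
    Real.log_prod fun e he => (sym2_lift_pos_of_mem_edgeFinset hψsym hψ x he).ne',
    Real.log_prod fun i _ => (zpow_pos (hb1 i (x i)) _).ne', Finset.sum_sub_distrib]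
  simp only [Real.log_zpow]
  push_cast
  ring

lemma sum_mul_log_beliefJoint_div_edgeProduct (hb1 : ∀ i s, 0 < b1 i s)
    (hb2 : ∀ i j, T.Adj i j → ∀ s t, 0 < b2 i j s t)
    (hψ : ∀ i j, T.Adj i j → ∀ s t, 0 < ψ2 i j s t) {r : ((i : V) → X i) → ℝ}
    (hr1 : ∀ i s, marg1 r i s = b1 i s)
    (hr2 : ∀ i j, T.Adj i j → ∀ s t, marg2 r i j s t = b2 i j s t) :
    ∑ x, r x * Real.log (beliefJoint T b1 b2 hbsym x / edgeProduct T ψ2 hψsym x)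
      = betheFreeEnergy T b1 b2 ψ2 hbsym hψsym := by
  simp_rw [log_beliefJoint_div_edgeProduct hbsym hψsym hb1 hb2 hψ, mul_add, Finset.sum_add_distrib,
    Finset.mul_sum]
  rw [Finset.sum_comm, Finset.sum_comm (s := Finset.univ), betheFreeEnergy, sub_eq_add_neg,
    ← Finset.sum_neg_distrib]
  congr 1
  · refine Finset.sum_congr rfl fun e he => ?_
    induction e with
    | _ i j =>
      have hij := SimpleGraph.mem_edgeFinset.1 he
      simp only [Sym2.lift_mk]
      rw [sum_mul_marg2 r i j fun s t => Real.log (b2 i j s t) - Real.log (ψ2 i j s t)]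
      refine Finset.sum_congr rfl fun s _ => Finset.sum_congr rfl fun t _ => ?_
      rw [hr2 i j hij, Real.log_div (hb2 i j hij s t).ne' (hψ i j hij s t).ne']
  · refine Finset.sum_congr rfl fun i _ => ?_
    rw [sum_mul_marg1 r i fun s => (1 - (T.degree i : ℝ)) * Real.log (b1 i s), Finset.mul_sum,
      ← Finset.sum_neg_distrib]
    refine Finset.sum_congr rfl fun s _ => ?_
    rw [hr1]
    ring

lemma betheFreeEnergy_add_log_eq (hb1 : ∀ i s, 0 < b1 i s)
    (hb2 : ∀ i j, T.Adj i j → ∀ s t, 0 < b2 i j s t)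
    (hψ : ∀ i j, T.Adj i j → ∀ s t, 0 < ψ2 i j s t) {r : ((i : V) → X i) → ℝ}
    (hr : ∑ x, r x = 1) (hr1 : ∀ i s, marg1 r i s = b1 i s)
    (hr2 : ∀ i j, T.Adj i j → ∀ s t, marg2 r i j s t = b2 i j s t) :
    betheFreeEnergy T b1 b2 ψ2 hbsym hψsym + Real.log (∑ y, edgeProduct T ψ2 hψsym y)
      = ∑ x, r x * Real.log (beliefJoint T b1 b2 hbsym x
          / (edgeProduct T ψ2 hψsym x / ∑ y, edgeProduct T ψ2 hψsym y)) := by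
  have hZ : 0 < ∑ y, edgeProduct T ψ2 hψsym y :=
    Finset.sum_pos (fun y _ => edgeProduct_pos hψsym hψ y)
      (Finset.nonempty_of_sum_ne_zero (hr ▸ one_ne_zero))
  have hlog : ∀ x, Real.log (beliefJoint T b1 b2 hbsym x
        / (edgeProduct T ψ2 hψsym x / ∑ y, edgeProduct T ψ2 hψsym y))
      = Real.log (beliefJoint T b1 b2 hbsym x / edgeProduct T ψ2 hψsym x)
        + Real.log (∑ y, edgeProduct T ψ2 hψsym y) := fun x => by
    rw [div_div_eq_mul_div, mul_div_right_comm, Real.log_mul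
      (div_pos (beliefJoint_pos hbsym hb1 hb2 x) (edgeProduct_pos hψsym hψ x)).ne' hZ.ne']
  simp_rw [hlog, mul_add, Finset.sum_add_distrib, ← Finset.sum_mul, hr, one_mul,
    sum_mul_log_beliefJoint_div_edgeProduct hbsym hψsym hb1 hb2 hψ hr1 hr2]

end Energy

theorem betheFreeEnergy_ge_neg_logZ_general (V : Type*) [Fintype V] [DecidableEq V]
    (X : V → Type*) [∀ i, Fintype (X i)] [∀ i, DecidableEq (X i)]
    (T : SimpleGraph V) [DecidableRel T.Adj] (hT : T.IsTree)
    (ψ2 : (i j : V) → X i → X j → ℝ)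
    (hψsym : ∀ i j s t, ψ2 i j s t = ψ2 j i t s)
    (hψpos : ∀ i j, T.Adj i j → ∀ s t, 0 < ψ2 i j s t)
    (ptil : ((i : V) → X i) → ℝ)
    (hptil : ∀ x, ptil x = ∏ e ∈ T.edgeFinset,
      Sym2.lift ⟨fun i j => ψ2 i j (x i) (x j), fun i j => hψsym i j (x i) (x j)⟩ e)
    (p : ((i : V) → X i) → ℝ)
    (hp : ∀ x, p x = ptil x / ∑ y : (i : V) → X i, ptil y)
    (b1 : (i : V) → X i → ℝ) (b2 : (i j : V) → X i → X j → ℝ)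
    (hb1pos : ∀ i s, 0 < b1 i s) (hb1sum : ∀ i, ∑ s, b1 i s = 1)
    (hbsym : ∀ i j s t, b2 i j s t = b2 j i t s)
    (hb2pos : ∀ i j, T.Adj i j → ∀ s t, 0 < b2 i j s t)
    (hmarg : ∀ i j, T.Adj i j → ∀ s : X i, ∑ t : X j, b2 i j s t = b1 i s) :
    -Real.log (∑ y : (i : V) → X i, ptil y)
        ≤ betheFreeEnergy T b1 b2 ψ2 hbsym hψsym ∧
      (betheFreeEnergy T b1 b2 ψ2 hbsym hψsym
          = -Real.log (∑ y : (i : V) → X i, ptil y) ↔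
        (∀ i : V, ∀ s : X i, b1 i s = marg1 p i s) ∧
          ∀ i j : V, T.Adj i j → ∀ (s : X i) (t : X j), b2 i j s t = marg2 p i j s t) := by
  obtain rfl : ptil = edgeProduct T ψ2 hψsym := funext hptil
  obtain rfl : p = fun x => edgeProduct T ψ2 hψsym x / ∑ y, edgeProduct T ψ2 hψsym y := funext hp
  obtain ⟨hq1, hq2⟩ := beliefJoint_marginals hT hbsym (fun i s => (hb1pos i s).ne') hmarg
  have hqpos := beliefJoint_pos hbsym hb1pos hb2pos
  have hqsum : ∑ x, beliefJoint T b1 b2 hbsym x = 1 := by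
    obtain ⟨i⟩ := hT.connected.nonempty
    rw [← sum_marg1 _ i, Finset.sum_congr rfl fun s _ => hq1 i s, hb1sum]
  have : Nonempty ((i : V) → X i) :=
    Finset.univ_nonempty_iff.1 (Finset.nonempty_of_sum_ne_zero (hqsum ▸ one_ne_zero))
  obtain ⟨hppos, hpsum⟩ := div_sum_pos_and_sum_div_sum_eq_one (edgeProduct_pos hψsym hψpos)
  have hKL := betheFreeEnergy_add_log_eq hbsym hψsym hb1pos hb2pos hψpos hqsum hq1 hq2
  have hKL_nonneg := sum_mul_log_div_nonneg (fun x => (hqpos x).le) hppos (hqsum.trans hpsum.symm)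
  refine ⟨by linarith, fun heq => ?_, fun ⟨hp1, hp2⟩ => ?_⟩
  · have hqp := (sum_mul_log_div_eq_zero_iff (fun x => (hqpos x).le) hppos
      (hqsum.trans hpsum.symm)).1 (by linarith)
    rw [← hqp]
    exact ⟨fun i s => (hq1 i s).symm, fun i j hij s t => (hq2 i j hij s t).symm⟩
  · have hrev := betheFreeEnergy_add_log_eq hbsym hψsym hb1pos hb2pos hψpos hpsum
      (fun i s => (hp1 i s).symm) fun i j hij s t => (hp2 i j hij s t).symm
    have := sum_mul_log_div_swap_nonpos (fun x => (hppos x).le) hqpos (hpsum.trans hqsum.symm)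
    linarith

/-- **The Bethe free energy of a tree MRF is minimized exactly at the true
marginals, with minimum `-ln Z`.**
For a pairwise Markov random field on a tree `T` with strictly positive
symmetric edge potentials `ψ`, `p̃(x) = Π_{{i,j}∈E(T)} ψ_{ij}(x_i,x_j)`,
`Z = Σ_x p̃(x)`, and `p = p̃/Z`, every consistent belief system `(b1, b2)`
satisfies `F_B ≥ -ln Z`, and `F_B = -ln Z` holds if and only if the beliefs
are the exact marginals of `p` (node beliefs `b_i = p_i` and edge beliefs
`b_{ij} = p_{ij}`).  In particular the minimum of the Bethe free energy over
all consistent belief systems equals `-ln Z`. -/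
theorem betheFreeEnergy_ge_neg_logZ (V : Type*) [Fintype V] [DecidableEq V] [Nonempty V]
    (X : V → Type*) [∀ i, Fintype (X i)] [∀ i, Nonempty (X i)] [∀ i, DecidableEq (X i)]
    (T : SimpleGraph V) [DecidableRel T.Adj] (hT : T.IsTree)
    (ψ2 : (i j : V) → X i → X j → ℝ)
    (hψsym : ∀ i j s t, ψ2 i j s t = ψ2 j i t s)
    (hψpos : ∀ i j, T.Adj i j → ∀ s t, 0 < ψ2 i j s t)
    (ptil : ((i : V) → X i) → ℝ)
    (hptil : ∀ x, ptil x = ∏ e ∈ T.edgeFinset,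
      Sym2.lift ⟨fun i j => ψ2 i j (x i) (x j), fun i j => hψsym i j (x i) (x j)⟩ e)
    (p : ((i : V) → X i) → ℝ)
    (hp : ∀ x, p x = ptil x / ∑ y : (i : V) → X i, ptil y)
    (b1 : (i : V) → X i → ℝ) (b2 : (i j : V) → X i → X j → ℝ)
    (hb1pos : ∀ i s, 0 < b1 i s) (hb1sum : ∀ i, ∑ s, b1 i s = 1)
    (hbsym : ∀ i j s t, b2 i j s t = b2 j i t s)
    (hb2pos : ∀ i j, T.Adj i j → ∀ s t, 0 < b2 i j s t)
    (hb2sum : ∀ i j, T.Adj i j → ∑ s : X i, ∑ t : X j, b2 i j s t = 1)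
    (hmarg : ∀ i j, T.Adj i j → ∀ s : X i, ∑ t : X j, b2 i j s t = b1 i s) :
    -Real.log (∑ y : (i : V) → X i, ptil y)
        ≤ betheFreeEnergy T b1 b2 ψ2 hbsym hψsym ∧
      (betheFreeEnergy T b1 b2 ψ2 hbsym hψsym
          = -Real.log (∑ y : (i : V) → X i, ptil y) ↔
        (∀ i : V, ∀ s : X i, b1 i s = marg1 p i s) ∧
          ∀ i j : V, T.Adj i j → ∀ (s : X i) (t : X j), b2 i j s t = marg2 p i j s t) :=
  betheFreeEnergy_ge_neg_logZ_general V X T hT ψ2 hψsym hψpos ptil hptil p hp b1 b2 hb1pos hb1sum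
    hbsym hb2pos hmarg
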